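/- Let k₁, k₂ > 0 and 0 < r, let Φ(x,y) = (x − 1/2)² + 4(y − 1/2)² − r², define k(x,y) = k₁ if Φ(x,y) ≤ 0 and k₂ if Φ(x,y) > 0, and let ψ(x,y) = (1/k(x,y)) · sin(πx/2) · Φ(x,y) · (1 + x² + y²). Then the flux field k ∇ψ, defined on the open set {Φ ≠ 0} (where ψ is differentiable), extends to a continuous vector field on ℝ² whose value at every point of the interface {Φ = 0} is sin(πx/2) · (1 + x² + y²) · ∇Φ(x,y); in particular the one-sided limits of k ∇ψ from inside and outside the ellipse agree on the interface. -/

import Mathlib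

/-!
Write `ψ = s / k` with `s = sin(πx/2) · Φ · (1 + x² + y²)` smooth. Off the interface `k` is
locally constant, so `k ∇ψ = ∇s` there; hence `∇s` is the continuous extension. On the
interface `Φ = 0`, the product rule kills every term of `∇s` except
`sin(πx/2) (1 + x² + y²) ∇Φ`.
-/

open Real Filter Topology

noncomputable def partials (f : ℝ × ℝ → ℝ) (q : ℝ × ℝ) : ℝ × ℝ :=
  (fderiv ℝ f q (1, 0), fderiv ℝ f q (0, 1))

theorem ContDiff.continuous_partials {f : ℝ × ℝ → ℝ} (hf : ContDiff ℝ 1 f) :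
    Continuous (partials f) := by
  have := hf.continuous_fderiv one_ne_zero
  unfold partials
  fun_prop

theorem partials_eq_deriv {f : ℝ × ℝ → ℝ} {q : ℝ × ℝ} (hf : DifferentiableAt ℝ f q) :
    partials f q = (deriv (fun x => f (x, q.2)) q.1, deriv (fun y => f (q.1, y)) q.2) := by
  have h1 : HasDerivAt (fun x : ℝ => (x, q.2)) ((1 : ℝ), (0 : ℝ)) q.1 :=
    (hasDerivAt_id _).prodMk (hasDerivAt_const _ _)
  have h2 : HasDerivAt (fun y : ℝ => (q.1, y)) ((0 : ℝ), (1 : ℝ)) q.2 :=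
    (hasDerivAt_const _ _).prodMk (hasDerivAt_id _)
  exact Prod.ext (hf.hasFDerivAt.comp_hasDerivAt q.1 h1).deriv.symm
    (hf.hasFDerivAt.comp_hasDerivAt q.2 h2).deriv.symm

theorem ite_nonpos_eventuallyEq {X α : Type*} [TopologicalSpace X] {Φ : X → ℝ} {q : X}
    (hΦ : ContinuousAt Φ q) (hq : Φ q ≠ 0) (a b : α) :
    (fun p => if Φ p ≤ 0 then a else b) =ᶠ[𝓝 q] fun _ => if Φ q ≤ 0 then a else b := by
  rcases hq.lt_or_gt with hneg | hpos
  · filter_upwards [hΦ.eventually_lt continuousAt_const hneg] with p hp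
    simp [hp.le, hneg.le]
  · filter_upwards [continuousAt_const.eventually_lt hΦ hpos] with p hp
    simp [hp.not_ge, hpos.not_ge]

theorem smul_fderiv_of_eventuallyEq_inv_smul {𝕜 E F : Type*} [NontriviallyNormedField 𝕜]
    [NormedAddCommGroup E] [NormedSpace 𝕜 E] [NormedAddCommGroup F] [NormedSpace 𝕜 F]
    {ψ s : E → F} {q : E} {c : 𝕜} (hc : c ≠ 0) (hs : DifferentiableAt 𝕜 s q)
    (h : ψ =ᶠ[𝓝 q] fun p => c⁻¹ • s p) : c • fderiv 𝕜 ψ q = fderiv 𝕜 s q := by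
  rw [h.fderiv_eq, fderiv_fun_const_smul hs, smul_inv_smul₀ hc]

theorem HasFDerivAt.mul_mul_of_eq_zero {E : Type*} [NormedAddCommGroup E] [NormedSpace ℝ E]
    {a Φ w : E → ℝ} {a' Φ' w' : E →L[ℝ] ℝ} {q : E} (ha : HasFDerivAt a a' q)
    (hΦ : HasFDerivAt Φ Φ' q) (hw : HasFDerivAt w w' q) (hq : Φ q = 0) :
    HasFDerivAt (fun p => a p * Φ p * w p) ((a q * w q) • Φ') q := by
  refine ((ha.fun_mul hΦ).fun_mul hw).congr_fderiv ?_
  ext v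
  simp [hq]
  ring

theorem partials_mul_mul_of_eq_zero {a Φ w : ℝ × ℝ → ℝ} {q : ℝ × ℝ}
    (ha : DifferentiableAt ℝ a q) (hΦ : DifferentiableAt ℝ Φ q) (hw : DifferentiableAt ℝ w q)
    (hq : Φ q = 0) : partials (fun p => a p * Φ p * w p) q = (a q * w q) • partials Φ q := by
  rw [partials, partials,
    (ha.hasFDerivAt.mul_mul_of_eq_zero hΦ.hasFDerivAt hw.hasFDerivAt hq).fderiv]
  rfl

theorem partials_ellipse (r : ℝ) (q : ℝ × ℝ) :
    partials (fun p => (p.1 - 1 / 2) ^ 2 + 4 * (p.2 - 1 / 2) ^ 2 - r ^ 2) q =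
      (2 * (q.1 - 1 / 2), 8 * (q.2 - 1 / 2)) := by
  rw [partials_eq_deriv (by fun_prop)]
  simp
  ring

theorem manufactured_flux_continuous_elliptic_interface_general
    (k₁ k₂ r : ℝ) (hk₁ : 0 < k₁) (hk₂ : 0 < k₂)
    (Φ : ℝ × ℝ → ℝ)
    (hΦ : ∀ q : ℝ × ℝ, Φ q = (q.1 - 1 / 2) ^ 2 + 4 * (q.2 - 1 / 2) ^ 2 - r ^ 2)
    (k : ℝ × ℝ → ℝ) (hk : ∀ q, k q = if Φ q ≤ 0 then k₁ else k₂)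
    (ψ : ℝ × ℝ → ℝ)
    (hψ : ∀ q : ℝ × ℝ, ψ q = (1 / k q) * Real.sin (π * q.1 / 2) * Φ q *
        (1 + q.1 ^ 2 + q.2 ^ 2)) :
    ∃ G : ℝ × ℝ → ℝ × ℝ, Continuous G ∧
      (∀ q : ℝ × ℝ, Φ q ≠ 0 →
        G q = k q • (fderiv ℝ ψ q (1, 0), fderiv ℝ ψ q (0, 1))) ∧
      (∀ q : ℝ × ℝ, Φ q = 0 →
        G q = (Real.sin (π * q.1 / 2) * (1 + q.1 ^ 2 + q.2 ^ 2)) •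
          (2 * (q.1 - 1 / 2), 8 * (q.2 - 1 / 2))) := by
  have hΦ_eq : Φ = fun p => (p.1 - 1 / 2) ^ 2 + 4 * (p.2 - 1 / 2) ^ 2 - r ^ 2 := funext hΦ
  have hΦ_smooth : ContDiff ℝ 1 Φ := by rw [hΦ_eq]; fun_prop
  set s : ℝ × ℝ → ℝ := fun p => Real.sin (π * p.1 / 2) * Φ p * (1 + p.1 ^ 2 + p.2 ^ 2)
  have hs : ContDiff ℝ 1 s := by fun_prop
  refine ⟨partials s, hs.continuous_partials, fun q hq => ?_, fun q hq => ?_⟩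
  · have hk_loc : k =ᶠ[𝓝 q] fun _ => k q := by
      simpa only [← funext hk, hk q] using
        ite_nonpos_eventuallyEq hΦ_smooth.continuous.continuousAt hq k₁ k₂
    have hψ_loc : ψ =ᶠ[𝓝 q] fun p => (k q)⁻¹ • s p := by
      filter_upwards [hk_loc] with p hp
      rw [hψ, hp, smul_eq_mul, one_div]
      ring
    have hkq : k q ≠ 0 := by
      rw [hk]
      split_ifs <;> positivity
    simp only [partials,
      ← smul_fderiv_of_eventuallyEq_inv_smul hkq (hs.differentiable one_ne_zero q) hψ_loc]
    rfl
  · rw [partials_mul_mul_of_eq_zero (by fun_prop) (hΦ_smooth.differentiable one_ne_zero q)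
      (by fun_prop) hq, hΦ_eq, partials_ellipse]

/-- For the manufactured solution `ψ` with piecewise constant diffusion coefficient
`k` across the elliptic interface `Φ = 0`, the flux field `k ∇ψ` (defined on the open
set `{Φ ≠ 0}` where `ψ` is differentiable) extends to a continuous vector field on
`ℝ²` whose value at every interface point equals
`sin(πx/2) (1 + x² + y²) ∇Φ(x,y)` with `∇Φ(x,y) = (2(x − 1/2), 8(y − 1/2))`;
in particular the one-sided limits of `k ∇ψ` from inside and outside agree on the
interface. -/
theorem manufactured_flux_continuous_elliptic_interface
    (k₁ k₂ r : ℝ) (hk₁ : 0 < k₁) (hk₂ : 0 < k₂) (hr : 0 < r)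
    (Φ : ℝ × ℝ → ℝ)
    (hΦ : ∀ q : ℝ × ℝ, Φ q = (q.1 - 1 / 2) ^ 2 + 4 * (q.2 - 1 / 2) ^ 2 - r ^ 2)
    (k : ℝ × ℝ → ℝ) (hk : ∀ q, k q = if Φ q ≤ 0 then k₁ else k₂)
    (ψ : ℝ × ℝ → ℝ)
    (hψ : ∀ q : ℝ × ℝ, ψ q = (1 / k q) * Real.sin (π * q.1 / 2) * Φ q *
        (1 + q.1 ^ 2 + q.2 ^ 2)) :
    ∃ G : ℝ × ℝ → ℝ × ℝ, Continuous G ∧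
      (∀ q : ℝ × ℝ, Φ q ≠ 0 →
        G q = k q • (fderiv ℝ ψ q (1, 0), fderiv ℝ ψ q (0, 1))) ∧
      (∀ q : ℝ × ℝ, Φ q = 0 →
        G q = (Real.sin (π * q.1 / 2) * (1 + q.1 ^ 2 + q.2 ^ 2)) •
          (2 * (q.1 - 1 / 2), 8 * (q.2 - 1 / 2))) :=
  manufactured_flux_continuous_elliptic_interface_general k₁ k₂ r hk₁ hk₂ Φ hΦ k hk ψ hψ
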